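/- arXiv:2403.01453 — 3 statements merged into one kernel-verified Lean document; each statement's English description precedes it below -/
import Mathlib

section
/- Let A₁,…,Aₙ be real symmetric n×n matrices such that ⟨A_α, A_β⟩ = tr(A_α A_β) = 0 for α ≠ β, ‖A₁‖ = 1 (Hilbert–Schmidt norm), and ‖A₂‖ ≥ ‖A₃‖ ≥ … ≥ ‖Aₙ‖. Then ∑_{α=2}^{n} ‖[A₁, A_α]‖² ≤ ‖A₂‖² + ∑_{α=2}^{n} ‖A_α‖², where [A,B] = AB − BA. -/
/-!
Conjugating by an orthogonal matrix that diagonalises `A₁` to `diag λ` (so `∑ λᵢ² = 1`) turns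
`‖[A₁, B]‖²` into `∑ (λ_p - λ_q)² B_pq²`. The excess weight `(λ_p - λ_q)² - 1` is positive only
on the edges of a star (such pairs pairwise meet and form no triangle), and its positive parts add
up to at most `2`. For `p ≠ q`, Bessel's inequality for the orthogonal family `B_α` tested against
`E_pq + E_qp` gives `∑_α (B_α)_pq² ≤ ‖A₂‖² / 2`.
-/

open Matrix

theorem SimpleGraph.exists_forall_adj_eq_or_eq_of_cliqueFree_three {V : Type*}
    {G : SimpleGraph V}
    (hmeet : ∀ a b c d, G.Adj a b → G.Adj c d → a = c ∨ a = d ∨ b = c ∨ b = d)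
    (htri : G.CliqueFree 3) {p q : V} (hpq : G.Adj p q) :
    ∃ v, ∀ a b, G.Adj a b → a = v ∨ b = v := by
  classical
  by_contra! h
  -- An edge avoiding `p` and an edge avoiding `q` meet outside `{p, q}`, closing a triangle.
  obtain ⟨r, t, hrt, hrp, htp⟩ := h p
  obtain ⟨u, w, huw, huq, hwq⟩ := h q
  obtain ⟨z, hqz, hzp⟩ : ∃ z, G.Adj q z ∧ z ≠ p := by
    rcases hmeet p q r t hpq hrt with h | h | rfl | rfl
    · exact absurd h.symm hrp
    · exact absurd h.symm htp
    · exact ⟨t, hrt, htp⟩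
    · exact ⟨r, hrt.symm, hrp⟩
  obtain ⟨z', hpz', hz'q⟩ : ∃ z', G.Adj p z' ∧ z' ≠ q := by
    rcases hmeet p q u w hpq huw with rfl | rfl | h | h
    · exact ⟨w, huw, hwq⟩
    · exact ⟨u, huw.symm, huq⟩
    · exact absurd h.symm huq
    · exact absurd h.symm hwq
  rcases hmeet q z p z' hqz hpz' with h | h | h | rfl
  · exact hpq.ne h.symm
  · exact hz'q h.symm
  · exact hzp h
  · exact htri {p, q, z} (SimpleGraph.is3Clique_triple_iff.2 ⟨hpq, hpz', hqz⟩)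

theorem sum_sub_sq_sub_one_le_one {ι : Type*} (y : ℝ) (z : ι → ℝ) (K : Finset ι)
    (h : y ^ 2 + ∑ j ∈ K, z j ^ 2 ≤ 1) : ∑ j ∈ K, ((y - z j) ^ 2 - 1) ≤ 1 := by
  have hexp : ∑ j ∈ K, ((y - z j) ^ 2 - 1)
      = K.card * (y ^ 2 - 1) - 2 * y * ∑ j ∈ K, z j + ∑ j ∈ K, z j ^ 2 := by
    have (j : ι) : (y - z j) ^ 2 - 1 = (y ^ 2 - 1) - 2 * y * z j + z j ^ 2 := by ring
    simp only [this, Finset.sum_add_distrib, Finset.sum_sub_distrib, Finset.sum_const,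
      nsmul_eq_mul, Finset.mul_sum]
    ring
  have hcs := sq_sum_le_card_mul_sum_sq (s := K) (f := z)
  have hk : (0 : ℝ) ≤ K.card := Nat.cast_nonneg _
  rw [hexp]
  nlinarith [sq_nonneg (y + ∑ j ∈ K, z j),
    Finset.sum_nonneg fun j (_ : j ∈ K) => sq_nonneg (z j)]

def farGraph {ι : Type*} (x : ι → ℝ) : SimpleGraph ι where
  Adj a b := 1 < (x a - x b) ^ 2
  symm := ⟨fun a b h => by rwa [sub_sq_comm]⟩
  loopless := ⟨fun a h => by norm_num at h⟩

@[simp]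
theorem farGraph_adj {ι : Type*} {x : ι → ℝ} {a b : ι} :
    (farGraph x).Adj a b ↔ 1 < (x a - x b) ^ 2 :=
  Iff.rfl

section farGraph

variable {ι : Type*} [Fintype ι] {x : ι → ℝ}

theorem sum_sq_le_one (hx : ∑ i, x i ^ 2 ≤ 1) (s : Finset ι) : ∑ i ∈ s, x i ^ 2 ≤ 1 :=
  (Finset.sum_le_univ_sum_of_nonneg fun _ => sq_nonneg _).trans hx

theorem farGraph_adj_mul_neg (hx : ∑ i, x i ^ 2 ≤ 1) {a b : ι} (hab : (farGraph x).Adj a b) :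
    x a * x b < 0 := by
  classical
  have hsum := sum_sq_le_one hx {a, b}
  rw [Finset.sum_pair hab.ne] at hsum
  rw [farGraph_adj] at hab
  nlinarith

theorem farGraph_adj_meet (hx : ∑ i, x i ^ 2 ≤ 1) {a b c d : ι} (hab : (farGraph x).Adj a b)
    (hcd : (farGraph x).Adj c d) : a = c ∨ a = d ∨ b = c ∨ b = d := by
  classical
  by_contra! h
  obtain ⟨hac, had, hbc, hbd⟩ := h
  have hsum := sum_sq_le_one hx {a, b, c, d}
  rw [Finset.sum_insert (by simp [hab.ne, hac, had]), Finset.sum_insert (by simp [hbc, hbd]),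
    Finset.sum_pair hcd.ne] at hsum
  rw [farGraph_adj] at hab hcd
  nlinarith [sq_nonneg (x a + x b), sq_nonneg (x c + x d)]

theorem farGraph_cliqueFree_three (hx : ∑ i, x i ^ 2 ≤ 1) : (farGraph x).CliqueFree 3 := by
  classical
  intro s hs
  obtain ⟨a, b, c, hab, hac, hbc, -⟩ := SimpleGraph.is3Clique_iff.1 hs
  -- no three reals are pairwise of opposite signs
  have h := mul_neg_of_pos_of_neg (mul_pos_of_neg_of_neg (farGraph_adj_mul_neg hx hab)
    (farGraph_adj_mul_neg hx hbc)) (farGraph_adj_mul_neg hx hac)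
  nlinarith [sq_nonneg (x a * x b * x c)]

theorem sum_posPart_sub_sq_sub_one_le_two_of_star (hx : ∑ i, x i ^ 2 ≤ 1) {v : ι}
    (hv : ∀ a b, (farGraph x).Adj a b → a = v ∨ b = v) :
    ∑ p, ∑ q, ((x p - x q) ^ 2 - 1)⁺ ≤ 2 := by
  classical
  set f : ι → ι → ℝ := fun p q => ((x p - x q) ^ 2 - 1)⁺ with hf
  have hf_eq_zero {p q : ι} (h : ¬ (farGraph x).Adj p q) : f p q = 0 :=
    posPart_eq_zero.2 (by rw [farGraph_adj] at h; linarith)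
  show ∑ p, ∑ q, f p q ≤ 2
  have hstar (p q : ι) :
      f p q ≤ (if p = v then f p q else 0) + (if q = v then f p q else 0) := by
    by_cases h : (farGraph x).Adj p q
    · have h0 : 0 ≤ f p q := posPart_nonneg _
      rcases hv p q h with rfl | rfl <;> split_ifs <;> simp_all
    · simp only [hf_eq_zero h]; split_ifs <;> simp
  set K := Finset.univ.filter fun q => (farGraph x).Adj v q
  have hK : ∑ q, f v q = ∑ q ∈ K, ((x v - x q) ^ 2 - 1) := by
    rw [Finset.sum_filter]
    refine Finset.sum_congr rfl fun q _ => ?_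
    split_ifs with h
    · exact posPart_eq_self.2 (by rw [farGraph_adj] at h; linarith)
    · exact hf_eq_zero h
  have hKsum := sum_sq_le_one hx (insert v K)
  rw [Finset.sum_insert (by simp [K])] at hKsum
  calc ∑ p, ∑ q, f p q
      ≤ ∑ p, ∑ q, ((if p = v then f p q else 0) + (if q = v then f p q else 0)) :=
        Finset.sum_le_sum fun p _ => Finset.sum_le_sum fun q _ => hstar p q
    _ = ∑ q, f v q + ∑ p, f p v := by
        simp [Finset.sum_add_distrib, Finset.sum_ite_eq']
    _ = 2 * ∑ q ∈ K, ((x v - x q) ^ 2 - 1) := by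
        simp only [hf, sub_sq_comm (x _) (x v), ← hK]; ring
    _ ≤ 2 := by linarith [sum_sub_sq_sub_one_le_one (x v) x K hKsum]

theorem sum_posPart_sub_sq_sub_one_le_two (hx : ∑ i, x i ^ 2 ≤ 1) :
    ∑ p, ∑ q, ((x p - x q) ^ 2 - 1)⁺ ≤ 2 := by
  by_cases hE : ∃ p q, (farGraph x).Adj p q
  · obtain ⟨p, q, hpq⟩ := hE
    obtain ⟨v, hv⟩ := SimpleGraph.exists_forall_adj_eq_or_eq_of_cliqueFree_three
      (fun _ _ _ _ => farGraph_adj_meet hx) (farGraph_cliqueFree_three hx) hpq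
    exact sum_posPart_sub_sq_sub_one_le_two_of_star hx hv
  · push Not at hE
    have hzero (p q : ι) : ((x p - x q) ^ 2 - 1)⁺ = 0 :=
      posPart_eq_zero.2 (by linarith [not_lt.1 (hE p q)])
    simp [hzero]

end farGraph

theorem Matrix.trace_mul_transpose_eq_sum {m n R : Type*} [Fintype m] [Fintype n]
    [AddCommMonoid R] [Mul R] (M N : Matrix m n R) :
    trace (M * Nᵀ) = ∑ i, ∑ j, M i j * N i j := by
  simp [trace, mul_apply]

theorem Matrix.trace_mul_transpose_self_nonneg {m n : Type*} [Fintype m] [Fintype n]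
    (M : Matrix m n ℝ) : 0 ≤ trace (M * Mᵀ) := by
  rw [trace_mul_transpose_eq_sum]
  exact Finset.sum_nonneg fun _ _ => Finset.sum_nonneg fun _ _ => mul_self_nonneg _

section

open scoped RealInnerProductSpace

theorem sum_inner_sq_le_mul_norm_sq {ι E : Type*} [NormedAddCommGroup E] [InnerProductSpace ℝ E]
    {s : Finset ι} {v : ι → E} (hv : (s : Set ι).Pairwise fun α β => ⟪v α, v β⟫ = 0)
    {W : ℝ} (hW₀ : 0 ≤ W) (hW : ∀ α ∈ s, ‖v α‖ ^ 2 ≤ W) (x : E) :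
    ∑ α ∈ s, ⟪v α, x⟫ ^ 2 ≤ W * ‖x‖ ^ 2 := by
  set S := ∑ α ∈ s, ⟪v α, x⟫ ^ 2
  set y := ∑ α ∈ s, ⟪v α, x⟫ • v α
  have hyx : ⟪y, x⟫ = S := by
    simp only [y, S, sum_inner, real_inner_smul_left, sq]
  have hyy : ‖y‖ ^ 2 ≤ W * S := by
    have : ‖y‖ ^ 2 = ∑ α ∈ s, ⟪v α, x⟫ ^ 2 * ‖v α‖ ^ 2 := by
      rw [← real_inner_self_eq_norm_sq]
      simp only [y, sum_inner, inner_sum, real_inner_smul_left, real_inner_smul_right]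
      refine Finset.sum_congr rfl fun α hα => ?_
      rw [Finset.sum_eq_single_of_mem α hα fun β hβ hβα => by rw [hv hβ hα hβα]; ring,
        real_inner_self_eq_norm_sq]
      ring
    rw [this, Finset.mul_sum]
    exact Finset.sum_le_sum fun α hα => by
      rw [mul_comm W]; exact mul_le_mul_of_nonneg_left (hW α hα) (sq_nonneg _)
  have hCS : S ^ 2 ≤ W * S * ‖x‖ ^ 2 := by
    calc S ^ 2 = ⟪y, x⟫ ^ 2 := by rw [hyx]
      _ ≤ (‖y‖ * ‖x‖) ^ 2 := by
          rw [← sq_abs]; gcongr; exact abs_real_inner_le_norm y x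
      _ = ‖y‖ ^ 2 * ‖x‖ ^ 2 := mul_pow _ _ _
      _ ≤ W * S * ‖x‖ ^ 2 := by gcongr
  have hS : 0 ≤ S := Finset.sum_nonneg fun _ _ => sq_nonneg _
  rcases hS.eq_or_lt with h | h
  · rw [← h]; positivity
  · nlinarith

theorem sum_sq_apply_le_half {ι m : Type*} [Fintype m] {s : Finset ι} {B : ι → Matrix m m ℝ}
    (hsym : ∀ α ∈ s, (B α).IsSymm)
    (horth : (s : Set ι).Pairwise fun α β => trace (B α * (B β)ᵀ) = 0)
    {W : ℝ} (hW₀ : 0 ≤ W) (hW : ∀ α ∈ s, trace (B α * (B α)ᵀ) ≤ W)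
    {p q : m} (hpq : p ≠ q) :
    ∑ α ∈ s, B α p q ^ 2 ≤ W / 2 := by
  classical
  let e (M : Matrix m m ℝ) : EuclideanSpace ℝ (m × m) := WithLp.toLp 2 fun k => M k.1 k.2
  have he (M N : Matrix m m ℝ) : ⟪e M, e N⟫ = trace (M * Nᵀ) := by
    simp [e, PiLp.inner_apply, trace_mul_transpose_eq_sum, Fintype.sum_prod_type, mul_comm]
  let y : EuclideanSpace ℝ (m × m) :=
    EuclideanSpace.single (p, q) 1 + EuclideanSpace.single (q, p) 1
  have hy : ‖y‖ ^ 2 = 2 := by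
    rw [← real_inner_self_eq_norm_sq, inner_add_left, inner_add_right, inner_add_right]
    norm_num [EuclideanSpace.inner_single_right, hpq, hpq.symm]
  have hBy : ∀ α ∈ s, ⟪e (B α), y⟫ = 2 * B α p q := fun α hα => by
    simp [e, y, inner_add_right, EuclideanSpace.inner_single_right, (hsym α hα).apply p q]
    ring
  have hsum : ∑ α ∈ s, ⟪e (B α), y⟫ ^ 2 = 4 * ∑ α ∈ s, B α p q ^ 2 := by
    rw [Finset.mul_sum]
    exact Finset.sum_congr rfl fun α hα => by rw [hBy α hα]; ring
  have := sum_inner_sq_le_mul_norm_sq (v := fun α => e (B α))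
    (fun α hα β hβ h => (he _ _).trans (horth hα hβ h)) hW₀
    (fun α hα => by rw [← real_inner_self_eq_norm_sq, he]; exact hW α hα) y
  rw [hsum, hy] at this
  linarith

end

theorem Matrix.trace_commutator_diagonal_mul_transpose {m R : Type*} [Fintype m] [DecidableEq m]
    [CommRing R] (x : m → R) (B : Matrix m m R) :
    trace ((diagonal x * B - B * diagonal x) * (diagonal x * B - B * diagonal x)ᵀ) =
      ∑ p, ∑ q, (x p - x q) ^ 2 * B p q ^ 2 := by
  simp only [trace_mul_transpose_eq_sum, sub_apply, diagonal_mul, mul_diagonal]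
  exact Finset.sum_congr rfl fun _ _ => Finset.sum_congr rfl fun _ _ => by ring

theorem sum_trace_commutator_diagonal_le {ι m : Type*} [Fintype m] [DecidableEq m]
    {x : m → ℝ} (hx : ∑ i, x i ^ 2 ≤ 1) {s : Finset ι} {B : ι → Matrix m m ℝ}
    (hsym : ∀ α ∈ s, (B α).IsSymm)
    (horth : (s : Set ι).Pairwise fun α β => trace (B α * (B β)ᵀ) = 0)
    {W : ℝ} (hW₀ : 0 ≤ W) (hW : ∀ α ∈ s, trace (B α * (B α)ᵀ) ≤ W) :
    ∑ α ∈ s, trace ((diagonal x * B α - B α * diagonal x) *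
        (diagonal x * B α - B α * diagonal x)ᵀ) ≤
      W + ∑ α ∈ s, trace (B α * (B α)ᵀ) := by
  set g : m → m → ℝ := fun p q => ((x p - x q) ^ 2 - 1)⁺
  have hentry (p q : m) : g p q * ∑ α ∈ s, B α p q ^ 2 ≤ g p q * (W / 2) := by
    rcases eq_or_ne p q with rfl | hpq
    · simp [g]
    · exact mul_le_mul_of_nonneg_left (sum_sq_apply_le_half hsym horth hW₀ hW hpq)
        (posPart_nonneg _)
  simp only [trace_commutator_diagonal_mul_transpose]
  simp only [trace_mul_transpose_eq_sum, ← sq]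
  calc ∑ α ∈ s, ∑ p, ∑ q, (x p - x q) ^ 2 * B α p q ^ 2
      = ∑ α ∈ s, ∑ p, ∑ q, ((x p - x q) ^ 2 - 1) * B α p q ^ 2 +
          ∑ α ∈ s, ∑ p, ∑ q, B α p q ^ 2 := by
        simp only [← Finset.sum_add_distrib]; ring_nf
    _ ≤ ∑ α ∈ s, ∑ p, ∑ q, g p q * B α p q ^ 2 + ∑ α ∈ s, ∑ p, ∑ q, B α p q ^ 2 := by
        gcongr with α _ p _ q _
        exact le_posPart _
    _ = ∑ p, ∑ q, g p q * ∑ α ∈ s, B α p q ^ 2 + ∑ α ∈ s, ∑ p, ∑ q, B α p q ^ 2 := by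
        simp only [Finset.mul_sum]
        rw [Finset.sum_comm]
        simp only [Finset.sum_comm (s := s)]
    _ ≤ ∑ p, ∑ q, g p q * (W / 2) + ∑ α ∈ s, ∑ p, ∑ q, B α p q ^ 2 := by
        gcongr ?_ + _
        exact Finset.sum_le_sum fun p _ => Finset.sum_le_sum fun q _ => hentry p q
    _ ≤ 2 * (W / 2) + ∑ α ∈ s, ∑ p, ∑ q, B α p q ^ 2 := by
        simp only [← Finset.sum_mul]
        gcongr
        exact sum_posPart_sub_sq_sub_one_le_two hx
    _ = W + ∑ α ∈ s, ∑ p, ∑ q, B α p q ^ 2 := by ring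

section

open Unitary

theorem Matrix.trace_conjStarAlgAut {m R : Type*} [Fintype m] [DecidableEq m] [CommRing R]
    [StarRing R] (u : unitary (Matrix m m R)) (X : Matrix m m R) :
    trace (conjStarAlgAut R _ u X) = trace X := by
  rw [conjStarAlgAut_apply, trace_mul_cycle, Unitary.coe_star_mul_self, one_mul]

theorem Matrix.trace_conjStarAlgAut_mul_transpose {m : Type*} [Fintype m] [DecidableEq m]
    (u : unitary (Matrix m m ℝ)) (X Y : Matrix m m ℝ) :
    trace (conjStarAlgAut ℝ _ u X * (conjStarAlgAut ℝ _ u Y)ᵀ) = trace (X * Yᵀ) := by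
  simp only [← conjTranspose_eq_transpose_of_trivial, ← star_eq_conjTranspose, ← map_star,
    ← map_mul, trace_conjStarAlgAut]

theorem Matrix.IsSymm.conjStarAlgAut {m : Type*} [Fintype m] [DecidableEq m] {X : Matrix m m ℝ}
    (hX : X.IsSymm) (u : unitary (Matrix m m ℝ)) : (conjStarAlgAut ℝ _ u X).IsSymm :=
  isHermitian_iff_isSymm.1 <| isHermitian_iff_isSelfAdjoint.2 <|
    (isHermitian_iff_isSelfAdjoint.1 (isHermitian_iff_isSymm.2 hX)).map _

theorem sum_trace_commutator_le {ι m : Type*} [Fintype m] [DecidableEq m] {A₀ : Matrix m m ℝ}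
    (hA₀ : A₀.IsSymm) (hnorm : trace (A₀ * A₀ᵀ) ≤ 1)
    {s : Finset ι} {A : ι → Matrix m m ℝ}
    (hsym : ∀ α ∈ s, (A α).IsSymm)
    (horth : (s : Set ι).Pairwise fun α β => trace (A α * (A β)ᵀ) = 0)
    {W : ℝ} (hW₀ : 0 ≤ W) (hW : ∀ α ∈ s, trace (A α * (A α)ᵀ) ≤ W) :
    ∑ α ∈ s, trace ((A₀ * A α - A α * A₀) * (A₀ * A α - A α * A₀)ᵀ) ≤
      W + ∑ α ∈ s, trace (A α * (A α)ᵀ) := by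
  have hH : A₀.IsHermitian := isHermitian_iff_isSymm.2 hA₀
  obtain ⟨u, hu⟩ : ∃ u : unitary (Matrix m m ℝ),
      conjStarAlgAut ℝ _ u A₀ = diagonal hH.eigenvalues :=
    ⟨star hH.eigenvectorUnitary, by simpa using hH.conjStarAlgAut_star_eigenvectorUnitary⟩
  set D := diagonal hH.eigenvalues
  have hcomm (α : ι) : trace ((A₀ * A α - A α * A₀) * (A₀ * A α - A α * A₀)ᵀ) =
      trace ((D * conjStarAlgAut ℝ _ u (A α) - conjStarAlgAut ℝ _ u (A α) * D) *
        (D * conjStarAlgAut ℝ _ u (A α) - conjStarAlgAut ℝ _ u (A α) * D)ᵀ) := by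
    rw [← hu, ← map_mul, ← map_mul, ← map_sub, trace_conjStarAlgAut_mul_transpose]
  have hnorm' (α : ι) : trace (A α * (A α)ᵀ) =
      trace (conjStarAlgAut ℝ _ u (A α) * (conjStarAlgAut ℝ _ u (A α))ᵀ) :=
    (trace_conjStarAlgAut_mul_transpose _ _ _).symm
  simp only [hcomm, hnorm']
  refine sum_trace_commutator_diagonal_le ?_ (fun α hα => (hsym α hα).conjStarAlgAut u)
    (fun α hα β hβ h => (trace_conjStarAlgAut_mul_transpose _ _ _).trans (horth hα hβ h))
    hW₀ (fun α hα => hnorm' α ▸ hW α hα)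
  rw [← trace_conjStarAlgAut_mul_transpose u, hu, trace_mul_transpose_eq_sum] at hnorm
  simpa [D, diagonal_apply, sq] using hnorm

end

/-- Lu's inequality: for real symmetric n×n matrices A₁,…,Aₙ with
tr(A_α A_β) = 0 for α ≠ β, ‖A₁‖ = 1 and ‖A₂‖ ≥ … ≥ ‖Aₙ‖ (Hilbert–Schmidt),
∑_{α=2}^n ‖[A₁,A_α]‖² ≤ ‖A₂‖² + ∑_{α=2}^n ‖A_α‖². -/
theorem lu_inequality (n : ℕ) (hn : 2 ≤ n)
    (A : Fin n → Matrix (Fin n) (Fin n) ℝ)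
    (hsym : ∀ α, (A α).IsSymm)
    (horth : ∀ α β, α ≠ β → Matrix.trace (A α * (A β)ᵀ) = 0)
    (hnorm1 : Matrix.trace (A ⟨0, by omega⟩ * (A ⟨0, by omega⟩)ᵀ) = 1)
    (hmono : ∀ α β : Fin n, 1 ≤ α.val → α ≤ β →
      Matrix.trace (A β * (A β)ᵀ) ≤ Matrix.trace (A α * (A α)ᵀ)) :
    ∑ α ∈ Finset.univ.erase (⟨0, by omega⟩ : Fin n),
      Matrix.trace ((A ⟨0, by omega⟩ * A α - A α * A ⟨0, by omega⟩) *
        (A ⟨0, by omega⟩ * A α - A α * A ⟨0, by omega⟩)ᵀ)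
    ≤ Matrix.trace (A ⟨1, by omega⟩ * (A ⟨1, by omega⟩)ᵀ) +
      ∑ α ∈ Finset.univ.erase (⟨0, by omega⟩ : Fin n),
        Matrix.trace (A α * (A α)ᵀ) := by
  refine sum_trace_commutator_le (hsym _) hnorm1.le (fun α _ => hsym α)
    (fun α _ β _ h => horth α β h) (trace_mul_transpose_self_nonneg _) fun α hα => ?_
  have hα0 : α.val ≠ 0 := fun h => Finset.ne_of_mem_erase hα (Fin.ext h)
  exact hmono _ α le_rfl (Fin.le_def.2 (Nat.one_le_iff_ne_zero.2 hα0))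
end

section
/- Let σ be a fully symmetric trilinear form on ℝⁿ with ∑_i σ(e_i, e_i, v) = 0 for all v (trace-free in the first two slots), and let S_{ij} = ∑_{p,q} σ_{ipq}σ_{jpq} be the fundamental matrix. If S has rank ≤ 1 (λ₂ = 0), then σ = 0. -/
lemma lagrange_aux {ι : Type*} [Fintype ι] (x y : ι → ℝ)
    (h : (∑ a, x a * y a) * (∑ a, x a * y a) = (∑ a, x a * x a) * (∑ a, y a * y a)) :
    ∀ a b, x a * y b = x b * y a := by
  have h2 : ∑ a, ∑ b, (x a * x a) * (y b * y b)
      = (∑ a, x a * x a) * (∑ a, y a * y a) := by rw [Finset.sum_mul_sum]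
  have h3 : ∑ a, ∑ b, (x a * y a) * (x b * y b)
      = (∑ a, x a * y a) * (∑ a, x a * y a) := by rw [Finset.sum_mul_sum]
  have h4 : ∑ a, ∑ b, (x b * x b) * (y a * y a)
      = (∑ a, x a * x a) * (∑ a, y a * y a) := by
    rw [Finset.sum_comm]; rw [Finset.sum_mul_sum]
  have key : (∑ a, ∑ b, (x a * y b - x b * y a) ^ 2) = 0 := by
    calc (∑ a, ∑ b, (x a * y b - x b * y a) ^ 2)
        = ∑ a, ∑ b, ((x a * x a) * (y b * y b) + (x b * x b) * (y a * y a)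
            - 2 * ((x a * y a) * (x b * y b))) := by
          refine Finset.sum_congr rfl fun a _ => Finset.sum_congr rfl fun b _ => by ring
      _ = (∑ a, ∑ b, (x a * x a) * (y b * y b)) + (∑ a, ∑ b, (x b * x b) * (y a * y a))
            - 2 * (∑ a, ∑ b, (x a * y a) * (x b * y b)) := by
          simp [Finset.sum_add_distrib, Finset.sum_sub_distrib, Finset.mul_sum]
      _ = 0 := by rw [h2, h3, h4, ← h]; ring
  intro a b
  have h5 : ∀ a ∈ Finset.univ (α := ι), (0:ℝ) ≤ ∑ b, (x a * y b - x b * y a) ^ 2 :=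
    fun a _ => Finset.sum_nonneg fun b _ => sq_nonneg _
  have h6 := (Finset.sum_eq_zero_iff_of_nonneg h5).mp key a (Finset.mem_univ a)
  have h7 := (Finset.sum_eq_zero_iff_of_nonneg (fun b _ => sq_nonneg _)).mp h6 b (Finset.mem_univ b)
  have := pow_eq_zero_iff (n := 2) (by norm_num) |>.mp h7
  linarith [this]

open Matrix in
lemma minor_vanish {n : ℕ} (S : Matrix (Fin n) (Fin n) ℝ)
    (hsymm : ∀ i j, S i j = S j i) (hrank : S.rank ≤ 1) :
    ∀ i j, S i j * S i j = S i i * S j j := by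
  intro i j
  by_contra hminor
  set c1 : Fin n → ℝ := fun k => S k i with hc1def
  set c2 : Fin n → ℝ := fun k => S k j with hc2def
  have hc1 : c1 ∈ LinearMap.range S.mulVecLin := by
    refine ⟨Pi.single i 1, ?_⟩
    ext k
    simp [Matrix.mulVecLin_apply, Matrix.mulVec_single, hc1def]
  have hc2 : c2 ∈ LinearMap.range S.mulVecLin := by
    refine ⟨Pi.single j 1, ?_⟩
    ext k
    simp [Matrix.mulVecLin_apply, Matrix.mulVec_single, hc2def]
  have hd : S i i * S j j - S i j * S j i ≠ 0 := by
    rw [← hsymm i j]; intro h; apply hminor; linarith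
  have hli : LinearIndependent ℝ ![c1, c2] := by
    rw [LinearIndependent.pair_iff]
    intro s t hst
    have ei := congrFun hst i
    have ej := congrFun hst j
    simp [hc1def, hc2def] at ei ej
    constructor
    · have : s * (S i i * S j j - S i j * S j i) =
        (s * S i i + t * S i j) * S j j - (s * S j i + t * S j j) * S i j := by ring
      rw [show s * S i i + t * S i j = 0 from by linarith [ei],
        show s * S j i + t * S j j = 0 from by linarith [ej]] at this
      simpa [hd] using mul_eq_zero.mp (by linarith [this] : s * (S i i * S j j - S i j * S j i) = 0)
    · have : t * (S i i * S j j - S i j * S j i) =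
        (s * S j i + t * S j j) * S i i - (s * S i i + t * S i j) * S j i := by ring
      rw [show s * S i i + t * S i j = 0 from by linarith [ei],
        show s * S j i + t * S j j = 0 from by linarith [ej]] at this
      simpa [hd] using mul_eq_zero.mp (by linarith [this] : t * (S i i * S j j - S i j * S j i) = 0)
  have hspan : Submodule.span ℝ (Set.range ![c1, c2]) ≤ LinearMap.range S.mulVecLin := by
    rw [Submodule.span_le]
    rintro v ⟨l, rfl⟩
    fin_cases l
    · exact hc1
    · exact hc2
  have h2 : 2 ≤ S.rank := by
    have hcard := finrank_span_eq_card hli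
    rw [Matrix.rank]
    calc 2 = Module.finrank ℝ (Submodule.span ℝ (Set.range ![c1, c2])) := by
            rw [hcard]; simp
      _ ≤ Module.finrank ℝ (LinearMap.range S.mulVecLin) := Submodule.finrank_mono hspan
  omega

/-- If σ is a fully symmetric trace-free trilinear form on ℝⁿ whose fundamental
matrix S_{ij} = ∑_{p,q} σ_{ipq}σ_{jpq} has rank ≤ 1 (i.e. λ₂ = 0), then σ = 0. -/
theorem rank_one_forces_zero (n : ℕ)
    (σ : Fin n → Fin n → Fin n → ℝ)
    (hsym1 : ∀ i j k, σ i j k = σ j i k)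
    (hsym2 : ∀ i j k, σ i j k = σ i k j)
    (htracefree : ∀ j, ∑ i, σ i i j = 0)
    (S : Matrix (Fin n) (Fin n) ℝ)
    (hS : ∀ i j, S i j = ∑ p, ∑ q, σ i p q * σ j p q)
    (hrank : S.rank ≤ 1) :
    ∀ i j k, σ i j k = 0 := by
  have hSsymm : ∀ i j, S i j = S j i := by
    intro i j; rw [hS, hS]
    exact Finset.sum_congr rfl fun p _ => Finset.sum_congr rfl fun q _ => mul_comm _ _
  have minor := minor_vanish S hSsymm hrank
  -- S entries as sums over pairs
  have hSprod : ∀ i j, S i j = ∑ a : Fin n × Fin n, σ i a.1 a.2 * σ j a.1 a.2 := by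
    intro i j
    rw [hS, ← Finset.univ_product_univ, Finset.sum_product]
  have key : ∀ i j p q r s, σ i p q * σ j r s = σ i r s * σ j p q := by
    intro i j p q r s
    have hm := minor i j
    rw [hSprod i j, hSprod i i, hSprod j j] at hm
    have := lagrange_aux (fun a : Fin n × Fin n => σ i a.1 a.2)
      (fun a : Fin n × Fin n => σ j a.1 a.2) hm (p, q) (r, s)
    simpa using this
  intro i j k
  by_contra h0
  set t := σ i j k with htdef
  set c : Fin n → ℝ := fun u => σ u j k with hcdef
  have hci : c i = t := rfl
  -- (A): σ u p q * t = c u * σ i p q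
  have hA : ∀ u p q, σ u p q * t = c u * σ i p q := by
    intro u p q
    have := key u i p q j k
    rw [hcdef]; dsimp only
    rw [htdef]; linarith [this]
  -- (B): σ i p q * t = c p * σ i i q
  have hB : ∀ p q, σ i p q * t = c p * σ i i q := by
    intro p q
    rw [hsym1 i p q]
    exact hA p i q
  -- (C): σ i i q * t = c q * σ i i i
  have hC : ∀ q, σ i i q * t = c q * σ i i i := by
    intro q
    rw [show σ i i q = σ q i i from by rw [hsym2 i i q, hsym1 i q i]]
    exact hA q i i
  set m := σ i i i with hmdef
  -- (D): σ u p q * t^3 = c u * c p * c q * m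
  have hD : ∀ u p q, σ u p q * t ^ 3 = c u * c p * c q * m := by
    intro u p q
    calc σ u p q * t ^ 3 = ((σ u p q * t) * t) * t := by ring
      _ = ((c u * σ i p q) * t) * t := by rw [hA u p q]
      _ = (c u * (σ i p q * t)) * t := by ring
      _ = (c u * (c p * σ i i q)) * t := by rw [hB p q]
      _ = (c u * c p) * (σ i i q * t) := by ring
      _ = (c u * c p) * (c q * m) := by rw [hC q]
      _ = c u * c p * c q * m := by ring
  -- from D with u=i,p=j,q=k: t * t^3 = t * c j * c k * m
  have hd1 : t ^ 3 = c j * c k * m := by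
    have h' := hD i j k
    rw [← htdef, hci] at h'
    exact mul_left_cancel₀ h0 (by linear_combination h')
  have hcjm : c j * m ≠ 0 := by
    intro h
    apply h0
    have : t ^ 3 = 0 := by rw [hd1]; linear_combination c k * h
    exact pow_eq_zero_iff (by norm_num) |>.mp this
  -- trace identity at q = j
  have htr : (∑ u, c u * c u) * (c j * m) = 0 := by
    have : ∑ u, σ u u j * t ^ 3 = 0 := by
      rw [← Finset.sum_mul, htracefree j, zero_mul]
    calc (∑ u, c u * c u) * (c j * m) = ∑ u, c u * c u * (c j * m) := by
          rw [Finset.sum_mul]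
      _ = ∑ u, σ u u j * t ^ 3 := Finset.sum_congr rfl fun u _ => by
          rw [hD u u j]; ring
      _ = 0 := this
  have hsum : 0 < ∑ u, c u * c u := by
    have h1 : ∀ u ∈ Finset.univ, (0:ℝ) ≤ c u * c u := fun u _ => mul_self_nonneg _
    have h2 : (0:ℝ) < c i * c i := by rw [hci]; exact mul_self_pos.mpr h0
    exact lt_of_lt_of_le h2 (Finset.single_le_sum h1 (Finset.mem_univ i))
  have := mul_ne_zero (ne_of_gt hsum) hcjm
  exact this htr
end

section
/- In the setting of Lu's inequality, equality ∑_{α=2}^{n} ‖[A₁,A_α]‖² = ‖A₂‖² + ∑_{α=2}^{n} ‖A_α‖² holds if A₁ = λ·diag(k, −I_k, 0) with λ = 1/√(k(k+1)), A_α = μ(E_{1α} + E_{α1}) for 2 ≤ α ≤ k+1, and A_{k+2} = … = Aₙ = 0: verify that these matrices achieve equality, i.e. for this explicit family ∑_{α=2}^{k+1} ‖[A₁,A_α]‖² = ‖A₂‖² + ∑_{α=2}^{k+1} ‖A_α‖². -/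
/-!
For a diagonal `D = diag d` one has `[D, a E_ij + b E_ji] = (d_i - d_j) (a E_ij - b E_ji)`, and
`‖a E_ij + b E_ji‖² = a² + b²` for `i ≠ j`. Hence every nonzero commutator `[A₁, A_α]` has squared
norm `2 λ² (k+1)² μ² = 2 μ² (k+1) / k`, every nonzero `A_α` has squared norm `2 μ²`, and summing
over the `k` nonzero `A_α` gives `2 μ² (k+1)` on both sides.
-/

open Matrix Finset

namespace Matrix

variable {ι R : Type*} [Fintype ι] [DecidableEq ι] [CommRing R]

theorem diagonal_mul_single (d : ι → R) (i j : ι) (a : R) :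
    diagonal d * single i j a = single i j (d i * a) := by
  ext p q
  by_cases h : i = p ∧ j = q
  · obtain ⟨rfl, rfl⟩ := h; simp
  · simp [h]

theorem single_mul_diagonal (d : ι → R) (i j : ι) (a : R) :
    single i j a * diagonal d = single i j (a * d j) := by
  ext p q
  by_cases h : i = p ∧ j = q
  · obtain ⟨rfl, rfl⟩ := h; simp
  · simp [h]

theorem diagonal_mul_sub_mul_diagonal_single_add_single (d : ι → R) (i j : ι) (a b : R) :
    diagonal d * (single i j a + single j i b) - (single i j a + single j i b) * diagonal d
      = single i j ((d i - d j) * a) + single j i ((d j - d i) * b) := by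
  simp only [mul_add, add_mul, diagonal_mul_single, single_mul_diagonal]
  ext p q
  simp only [sub_apply, add_apply, single_apply]
  split_ifs <;> ring

theorem trace_single_add_single_mul_transpose {i j : ι} (h : i ≠ j) (a b : R) :
    trace ((single i j a + single j i b) * (single i j a + single j i b)ᵀ) = a ^ 2 + b ^ 2 := by
  simp [transpose_single, add_mul, mul_add, single_mul_single_of_ne _ _ _ _ h,
    single_mul_single_of_ne _ _ _ _ h.symm, sq]

end Matrix

theorem Fin.sum_erase_zero_eq_nsmul {M : Type*} [AddCommMonoid M] {n k : ℕ} (hk : k < n)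
    (f : Fin n → M) (c : M) (hmid : ∀ i : Fin n, 1 ≤ i.val → i.val ≤ k → f i = c)
    (htop : ∀ i : Fin n, k < i.val → f i = 0) :
    ∑ i ∈ univ.erase ⟨0, by omega⟩, f i = k • c := by
  obtain ⟨m, rfl⟩ : ∃ m, n = m + 1 := ⟨n - 1, by omega⟩
  have hsucc : ∀ i : Fin m, f i.succ = if (i : ℕ) < k then c else 0 := by
    intro i
    split_ifs with h
    · exact hmid _ (by simp) (by simp; omega)
    · exact htop _ (by simp; omega)
  calc ∑ i ∈ univ.erase 0, f i = ∑ i : Fin m, f i.succ := by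
        rw [Fin.univ_succ, erase_cons, sum_map]; rfl
    _ = #{i : Fin m | (i : ℕ) < k} • c := by
        simp only [hsucc, sum_ite, sum_const_zero, add_zero]
        exact Finset.sum_const c
    _ = k • c := by rw [Fin.card_filter_val_lt, min_eq_right (by omega)]

/-- Equality case of Lu's inequality: for the explicit family
A₁ = λ·diag(k, −I_k, 0) with λ = 1/√(k(k+1)),
A_α = μ(E_{1α} + E_{α1}) for 2 ≤ α ≤ k+1 and A_{k+2} = … = Aₙ = 0,
one has ∑_{α=2}^n ‖[A₁,A_α]‖² = ‖A₂‖² + ∑_{α=2}^n ‖A_α‖².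
(Indices are 0-based.) -/
theorem lu_equality_case (n k : ℕ) (hk : 1 ≤ k) (hkn : k ≤ n - 1)
    (lam mu : ℝ) (hlam : lam = 1 / Real.sqrt (k * (k + 1)))
    (A : Fin n → Matrix (Fin n) (Fin n) ℝ)
    (hA0 : A ⟨0, by omega⟩ = lam • Matrix.diagonal
      (fun i : Fin n => if i.val = 0 then (k : ℝ) else if i.val ≤ k then -1 else 0))
    (hAmid : ∀ α : Fin n, 1 ≤ α.val → α.val ≤ k →
      A α = mu • (Matrix.single ⟨0, by omega⟩ α (1 : ℝ) +
        Matrix.single α ⟨0, by omega⟩ (1 : ℝ)))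
    (hAtop : ∀ α : Fin n, k + 1 ≤ α.val → A α = 0) :
    ∑ α ∈ Finset.univ.erase (⟨0, by omega⟩ : Fin n),
      Matrix.trace ((A ⟨0, by omega⟩ * A α - A α * A ⟨0, by omega⟩) *
        (A ⟨0, by omega⟩ * A α - A α * A ⟨0, by omega⟩)ᵀ)
    = Matrix.trace (A ⟨1, by omega⟩ * (A ⟨1, by omega⟩)ᵀ) +
      ∑ α ∈ Finset.univ.erase (⟨0, by omega⟩ : Fin n),
        Matrix.trace (A α * (A α)ᵀ) := by
  set z : Fin n := ⟨0, by omega⟩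
  have hz : ∀ α : Fin n, 1 ≤ α.val → z ≠ α := fun α h => Fin.ne_of_val_ne (by simp [z]; omega)
  have hA0_diagonal : A z = diagonal (lam • fun i : Fin n =>
      if i.val = 0 then (k : ℝ) else if i.val ≤ k then -1 else 0) := by
    rw [hA0, diagonal_smul]
  have hAmid_single : ∀ α : Fin n, 1 ≤ α.val → α.val ≤ k → A α = single z α mu + single α z mu := by
    intro α h1 h2
    rw [hAmid α h1 h2, smul_add, smul_single, smul_single, smul_eq_mul, mul_one]
  have hnorm : ∀ α : Fin n, 1 ≤ α.val → α.val ≤ k → trace (A α * (A α)ᵀ) = 2 * mu ^ 2 := by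
    intro α h1 h2
    rw [hAmid_single α h1 h2, trace_single_add_single_mul_transpose (hz α h1)]
    ring
  have hcomm : ∀ α : Fin n, 1 ≤ α.val → α.val ≤ k →
      trace ((A z * A α - A α * A z) * (A z * A α - A α * A z)ᵀ)
        = 2 * (lam * (k + 1) * mu) ^ 2 := by
    intro α h1 h2
    rw [hA0_diagonal, hAmid_single α h1 h2, diagonal_mul_sub_mul_diagonal_single_add_single,
      trace_single_add_single_mul_transpose (hz α h1)]
    simp only [Pi.smul_apply, smul_eq_mul, z, ↓reduceIte, if_neg (show α.val ≠ 0 by omega), if_pos h2]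
    ring
  have hlam2 : lam ^ 2 * (k * (k + 1)) = 1 := by
    rw [hlam, div_pow, one_pow, Real.sq_sqrt (by positivity)]
    field_simp
  rw [Fin.sum_erase_zero_eq_nsmul (by omega) _ _ hcomm (fun α h => by simp [hAtop α h]),
    Fin.sum_erase_zero_eq_nsmul (by omega) _ _ hnorm (fun α h => by simp [hAtop α h]),
    hnorm _ le_rfl (by simpa using hk), nsmul_eq_mul, nsmul_eq_mul]
  linear_combination (2 * mu ^ 2 * (k + 1)) * hlam2
end
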